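/- arXiv:2107.12484 — 2 statements merged into one kernel-verified Lean document; each statement's English description precedes it below -/
import Mathlib

section
/- Purchase cost bound: if α > 0 satisfies φ(R + γαeₙ − Λ) = φ(R) with Λ ≥ 0, Λₙ = 0, then α ≥ (1/γ)pᵀΛ where p = ∇φ(R)/∇φ(R)ₙ. -/
/-!
A concave function lies below its tangent plane: `φ y ≤ φ R + ⟪∇φ(R), y - R⟫`.
For the trade `y = R + γα eₙ - Λ` the value is unchanged, so the tangent term is nonnegative,
i.e. `∑ᵢ ∇φ(R)ᵢ Λᵢ ≤ γα ∇φ(R)ₙ`; dividing by `γ ∇φ(R)ₙ > 0` gives the bound.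
The tangent-plane inequality itself comes from restricting `φ` to the segment `[R, y]`.
-/

open InnerProductSpace

theorem ConcaveOn.le_add_fderiv {E : Type*} [NormedAddCommGroup E] [NormedSpace ℝ E]
    {s : Set E} {f : E → ℝ} {f' : E →L[ℝ] ℝ} {x y : E}
    (hf : ConcaveOn ℝ s f) (hx : x ∈ s) (hy : y ∈ s) (hf' : HasFDerivAt f f' x) :
    f y ≤ f x + f' (y - x) := by
  set L : ℝ →ᵃ[ℝ] E := AffineMap.lineMap x y
  have hL_mem : Set.MapsTo L (Set.Icc 0 1) s := fun t ht =>
    hf.1.segment_subset hx hy (segment_eq_image_lineMap ℝ x y ▸ ⟨t, ht, rfl⟩)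
  have hψ : ConcaveOn ℝ (Set.Icc 0 1) (f ∘ L) :=
    (hf.comp_affineMap L).subset hL_mem.subset_preimage (convex_Icc 0 1)
  have hψ_deriv : HasDerivAt (f ∘ L) (f' (y - x)) 0 :=
    hf'.comp_hasDerivAt_of_eq 0 AffineMap.hasDerivAt_lineMap
      (AffineMap.lineMap_apply_zero x y).symm
  have hslope : slope (f ∘ L) 0 1 = f y - f x := by simp [slope_def_field, L]
  linarith [hψ.slope_le_of_hasDerivAt (Set.left_mem_Icc.2 zero_le_one)
    (Set.right_mem_Icc.2 zero_le_one) zero_lt_one hψ_deriv]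

theorem ConcaveOn.le_add_inner_gradient {F : Type*} [NormedAddCommGroup F]
    [InnerProductSpace ℝ F] [CompleteSpace F] {s : Set F} {f : F → ℝ} {g x y : F}
    (hf : ConcaveOn ℝ s f) (hx : x ∈ s) (hy : y ∈ s) (hg : HasGradientAt f g x) :
    f y ≤ f x + ⟪g, y - x⟫_ℝ := by
  simpa [toDual_apply_apply] using hf.le_add_fderiv hx hy hg

theorem EuclideanSpace.inner_smul_single_sub {ι : Type*} [Fintype ι] [DecidableEq ι]
    (g v : EuclideanSpace ℝ ι) (j : ι) (c : ℝ) :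
    ⟪g, c • EuclideanSpace.single j 1 - v⟫_ℝ = c * g j - ∑ i, g i * v i := by
  simp [inner_sub_right, PiLp.inner_apply, mul_comm]

theorem purchase_cost_bound_general {n : ℕ}
    (φ : EuclideanSpace ℝ (Fin (n + 1)) → ℝ)
    (g : EuclideanSpace ℝ (Fin (n + 1)) → EuclideanSpace ℝ (Fin (n + 1)))
    (hconc : ConcaveOn ℝ {x : EuclideanSpace ℝ (Fin (n + 1)) | ∀ i, 0 ≤ x i} φ)
    (hgrad : ∀ x, (∀ i, 0 ≤ x i) → HasGradientAt φ (g x) x)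
    (γ : ℝ) (hγ : γ ∈ Set.Ioc (0 : ℝ) 1)
    (R Λ : EuclideanSpace ℝ (Fin (n + 1)))
    (hR : ∀ i, 0 ≤ R i)
    (hgn : 0 < g R (Fin.last n))
    (α : ℝ)
    (hdom : ∀ i, 0 ≤ (R + (γ * α) • EuclideanSpace.single (Fin.last n) (1 : ℝ) - Λ) i)
    (hvalid : φ (R + (γ * α) • EuclideanSpace.single (Fin.last n) (1 : ℝ) - Λ) = φ R) :
    α ≥ (1 / γ) * ∑ i, (g R i / g R (Fin.last n)) * Λ i := by
  have htangent := hconc.le_add_inner_gradient hR hdom (hgrad R hR)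
  rw [hvalid, add_sub_assoc, add_sub_cancel_left,
    EuclideanSpace.inner_smul_single_sub] at htangent
  have hsum : ∑ i, (g R i / g R (Fin.last n)) * Λ i
      = (∑ i, g R i * Λ i) / g R (Fin.last n) := by
    rw [Finset.sum_div]
    exact Finset.sum_congr rfl fun i _ => div_mul_eq_mul_div _ _ _
  rw [ge_iff_le, hsum, one_div, inv_mul_le_iff₀ hγ.1, div_le_iff₀ hgn]
  linarith

/-- Purchase cost bound: if `α > 0` satisfies `φ(R + γαeₙ − Λ) = φ(R)` with
`Λ ≥ 0`, `Λₙ = 0`, then `α ≥ (1/γ)·pᵀΛ` where `p = ∇φ(R)/∇φ(R)ₙ`. -/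
theorem purchase_cost_bound {n : ℕ}
    (φ : EuclideanSpace ℝ (Fin (n + 1)) → ℝ)
    (g : EuclideanSpace ℝ (Fin (n + 1)) → EuclideanSpace ℝ (Fin (n + 1)))
    (hconc : ConcaveOn ℝ {x : EuclideanSpace ℝ (Fin (n + 1)) | ∀ i, 0 ≤ x i} φ)
    (hgrad : ∀ x, (∀ i, 0 ≤ x i) → HasGradientAt φ (g x) x)
    (hmono : ∀ x y : EuclideanSpace ℝ (Fin (n + 1)), (∀ i, x i ≤ y i) → φ x ≤ φ y)
    (γ : ℝ) (hγ : γ ∈ Set.Ioc (0 : ℝ) 1)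
    (R Λ : EuclideanSpace ℝ (Fin (n + 1)))
    (hR : ∀ i, 0 ≤ R i) (hΛ : ∀ i, 0 ≤ Λ i) (hΛn : Λ (Fin.last n) = 0)
    (hgn : 0 < g R (Fin.last n))
    (α : ℝ) (hα : 0 < α)
    (hdom : ∀ i, 0 ≤ (R + (γ * α) • EuclideanSpace.single (Fin.last n) (1 : ℝ) - Λ) i)
    (hvalid : φ (R + (γ * α) • EuclideanSpace.single (Fin.last n) (1 : ℝ) - Λ) = φ R) :
    α ≥ (1 / γ) * ∑ i, (g R i / g R (Fin.last n)) * Λ i :=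
  purchase_cost_bound_general φ g hconc hgrad γ hγ R Λ hR hgn α hdom hvalid
end

section
/- No-trade condition sufficiency for linear utility: if U(z) = πᵀz with π > 0, and there exists α > 0 with γp ≤ απ ≤ p (componentwise), where p = ∇φ(R)/∇φ(R)ₙ, then (Δ, Λ) = (0, 0) is optimal for the relaxed trading problem: every feasible (Δ, Λ) (i.e., Δ, Λ ≥ 0 with φ(R + γΔ − Λ) ≥ φ(R)) satisfies πᵀ(Λ − Δ) ≤ 0. -/
/-!
Concavity puts `φ` below its tangent plane at `R`, so a feasible trade, which does not decrease
`φ`, has nonnegative marginal value `∇φ(R)ᵀ(γΔ − Λ) ≥ 0`. Scaled by `α ∇φ(R)ₙ`, the private prices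
`π` lie componentwise between `γ ∇φ(R)` and `∇φ(R)`; pricing the purchases `Δ ≥ 0` at the lower
bound and the sales `Λ ≥ 0` at the upper one shows that the utility gain `πᵀ(Λ − Δ)` is at most a
positive multiple of `−∇φ(R)ᵀ(γΔ − Λ) ≤ 0`.
-/

open scoped RealInnerProductSpace

theorem ConcaveOn.le_add_inner_of_hasGradientAt {E : Type*} [NormedAddCommGroup E]
    [InnerProductSpace ℝ E] [CompleteSpace E] {s : Set E} {f : E → ℝ} {x y g : E}
    (hf : ConcaveOn ℝ s f) (hx : x ∈ s) (hy : y ∈ s) (hg : HasGradientAt f g x) :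
    f y ≤ f x + ⟪g, y - x⟫ := by
  set ℓ := AffineMap.lineMap (k := ℝ) x y
  have hℓ : ConcaveOn ℝ (ℓ ⁻¹' s) (f ∘ ℓ) := hf.comp_affineMap ℓ
  have hderiv : HasDerivAt (f ∘ ℓ) ⟪g, y - x⟫ 0 := by
    have hg' : HasFDerivAt f (InnerProductSpace.toDual ℝ E g) (ℓ 0) := by
      simpa [ℓ] using hg.hasFDerivAt
    simpa using hg'.comp_hasDerivAt (0 : ℝ) AffineMap.hasDerivAt_lineMap
  have hslope := hℓ.slope_le_of_hasDerivAt (x := 0) (y := 1) (by simpa [ℓ] using hx)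
    (by simpa [ℓ] using hy) one_pos hderiv
  simp only [slope_def_field, Function.comp_apply, ℓ, AffineMap.lineMap_apply_zero,
    AffineMap.lineMap_apply_one, sub_zero, div_one] at hslope
  linarith

theorem sum_mul_sub_le_sum_mul_sub_mul {ι : Type*} [Fintype ι] {γ : ℝ} {w c Δ Λ : ι → ℝ}
    (hc : ∀ i, γ * w i ≤ c i ∧ c i ≤ w i) (hΔ : ∀ i, 0 ≤ Δ i) (hΛ : ∀ i, 0 ≤ Λ i) :
    ∑ i, c i * (Λ i - Δ i) ≤ ∑ i, w i * (Λ i - γ * Δ i) := by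
  refine Finset.sum_le_sum fun i _ => ?_
  linarith [mul_le_mul_of_nonneg_right (hc i).1 (hΔ i), mul_le_mul_of_nonneg_right (hc i).2 (hΛ i)]

theorem no_trade_condition_linear_utility_general {n : ℕ}
    (φ : EuclideanSpace ℝ (Fin (n + 1)) → ℝ)
    (g : EuclideanSpace ℝ (Fin (n + 1)) → EuclideanSpace ℝ (Fin (n + 1)))
    (hconc : ConcaveOn ℝ {x : EuclideanSpace ℝ (Fin (n + 1)) | ∀ i, 0 ≤ x i} φ)
    (hgrad : ∀ x, (∀ i, 0 ≤ x i) → HasGradientAt φ (g x) x)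
    (γ : ℝ)
    (R : EuclideanSpace ℝ (Fin (n + 1))) (hR : ∀ i, 0 ≤ R i)
    (hgpos : ∀ i, 0 < g R i)
    (π : Fin (n + 1) → ℝ)
    (α : ℝ) (hα : 0 < α)
    (hno : ∀ i, γ * (g R i / g R (Fin.last n)) ≤ α * π i ∧
      α * π i ≤ g R i / g R (Fin.last n)) :
    ∀ Δ Λ : EuclideanSpace ℝ (Fin (n + 1)), (∀ i, 0 ≤ Δ i) → (∀ i, 0 ≤ Λ i) →
      (∀ i, 0 ≤ (R + γ • Δ - Λ) i) →
      φ (R + γ • Δ - Λ) ≥ φ R →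
      ∑ i, π i * (Λ i - Δ i) ≤ 0 := by
  intro Δ Λ hΔ hΛ hfeas hφ
  have hnum : 0 < g R (Fin.last n) := hgpos _
  have hgain : 0 ≤ ⟪g R, γ • Δ - Λ⟫ := by
    have := hconc.le_add_inner_of_hasGradientAt hR hfeas (hgrad R hR)
    rw [show R + γ • Δ - Λ - R = γ • Δ - Λ by abel] at this
    linarith
  have hbounds : ∀ i, γ * g R i ≤ α * g R (Fin.last n) * π i ∧
      α * g R (Fin.last n) * π i ≤ g R i := by
    intro i
    obtain ⟨hlow, hhigh⟩ := hno i
    rw [mul_div_assoc', div_le_iff₀ hnum] at hlow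
    rw [le_div_iff₀ hnum] at hhigh
    constructor <;> linarith
  have hsum := sum_mul_sub_le_sum_mul_sub_mul hbounds hΔ hΛ
  have hinner : ∑ i, g R i * (Λ i - γ * Δ i) = -⟪g R, γ • Δ - Λ⟫ := by
    simp only [PiLp.inner_apply, ← Finset.sum_neg_distrib]
    refine Finset.sum_congr rfl fun i _ => ?_
    simp only [RCLike.inner_apply, conj_trivial, PiLp.sub_apply, PiLp.smul_apply, smul_eq_mul]
    ring
  rw [hinner] at hsum
  simp_rw [mul_assoc, ← Finset.mul_sum] at hsum
  exact nonpos_of_mul_nonpos_right (by linarith) (mul_pos hα hnum)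

/-- No-trade condition sufficiency for linear utility: if there exists `α > 0`
with `γp ≤ απ ≤ p` componentwise, then the zero trade is optimal: every feasible
trade has nonpositive utility gain `πᵀ(Λ − Δ) ≤ 0`. -/
theorem no_trade_condition_linear_utility {n : ℕ}
    (φ : EuclideanSpace ℝ (Fin (n + 1)) → ℝ)
    (g : EuclideanSpace ℝ (Fin (n + 1)) → EuclideanSpace ℝ (Fin (n + 1)))
    (hconc : ConcaveOn ℝ {x : EuclideanSpace ℝ (Fin (n + 1)) | ∀ i, 0 ≤ x i} φ)
    (hgrad : ∀ x, (∀ i, 0 ≤ x i) → HasGradientAt φ (g x) x)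
    (hmono : ∀ x y : EuclideanSpace ℝ (Fin (n + 1)), (∀ i, x i ≤ y i) → φ x ≤ φ y)
    (γ : ℝ) (hγ : γ ∈ Set.Ioc (0 : ℝ) 1)
    (R : EuclideanSpace ℝ (Fin (n + 1))) (hR : ∀ i, 0 ≤ R i)
    (hgpos : ∀ i, 0 < g R i)
    (π : Fin (n + 1) → ℝ) (hπ : ∀ i, 0 < π i)
    (α : ℝ) (hα : 0 < α)
    (hno : ∀ i, γ * (g R i / g R (Fin.last n)) ≤ α * π i ∧
      α * π i ≤ g R i / g R (Fin.last n)) :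
    ∀ Δ Λ : EuclideanSpace ℝ (Fin (n + 1)), (∀ i, 0 ≤ Δ i) → (∀ i, 0 ≤ Λ i) →
      (∀ i, 0 ≤ (R + γ • Δ - Λ) i) →
      φ (R + γ • Δ - Λ) ≥ φ R →
      ∑ i, π i * (Λ i - Δ i) ≤ 0 :=
  no_trade_condition_linear_utility_general φ g hconc hgrad γ R hR hgpos π α hα hno
end
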